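/- For all positive integers k and s, |stars(k,s)| < (k/ln 2)^s. -/

import Mathlib

/-!
Peeling off the first block gives `|stars(k,s)| ≤ ∑_{β ≠ −^k, |β| ≤ s} |stars(k, s - |β|)|`, where
`|β|` is the number of `★`'s in `β`. With `c = k / ln 2`, strong induction on `s` then bounds
`|stars(k,s)|` by `c^s · ∑_{β ≠ −^k} c^{-|β|} = c^s ((1 + ln 2 / k)^k - 1)`, and
`(1 + ln 2 / k)^k < exp (ln 2) = 2`.
-/

/-- `stars(k,s)`: the set of finite sequences `β = (β₁,…,β_t)` with each
`β_j ∈ {★,−}^k \ {−}^k` (modeled as `Fin k → Bool` with at least one `true`)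
and the total number of `★`'s over all `β_j` equal to `s`. -/
def starsSet (k s : ℕ) : Set (List (Fin k → Bool)) :=
  {l | (∀ b ∈ l, ∃ i, b i = true) ∧
    (l.map fun b => (Finset.univ.filter fun i => b i = true).card).sum = s}

open Finset

section WeightedLists

variable {α : Type*}

def weightedLists (w : α → ℕ) (s : ℕ) : Set (List α) :=
  {l | (∀ a ∈ l, 0 < w a) ∧ (l.map w).sum = s}

variable {w : α → ℕ}

lemma length_le_of_mem_weightedLists {s : ℕ} {l : List α} (hl : l ∈ weightedLists w s) :
    l.length ≤ s := by
  obtain ⟨hpos, rfl⟩ := hl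
  simpa using List.sum_le_sum (f := fun _ => 1) (g := w) hpos

lemma finite_weightedLists [Finite α] (s : ℕ) : (weightedLists w s).Finite :=
  (List.finite_length_le α s).subset fun _ => length_le_of_mem_weightedLists

lemma weightedLists_zero : weightedLists w 0 = {[]} := by
  ext (_ | ⟨a, l⟩)
  · simp [weightedLists]
  · simp only [weightedLists, List.mem_cons, forall_eq_or_imp, List.map_cons, List.sum_cons,
      Set.mem_ofPred_eq, Set.mem_singleton_iff, reduceCtorEq, iff_false, not_and]
    intro ha _
    omega

variable [Fintype α]

lemma weightedLists_subset_biUnion {s : ℕ} (hs : 0 < s) :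
    weightedLists w s ⊆
      ⋃ a ∈ ({a | 0 < w a ∧ w a ≤ s} : Finset α), (a :: ·) '' weightedLists w (s - w a) := by
  rintro (_ | ⟨a, l⟩) ⟨hpos, hsum⟩
  · exact absurd hsum hs.ne
  · simp only [List.mem_cons, forall_eq_or_imp, List.map_cons, List.sum_cons] at hpos hsum
    simp only [Set.mem_iUnion, Set.mem_image, List.cons.injEq]
    exact ⟨a, by simp only [mem_filter, mem_univ, true_and]; omega, l,
      ⟨hpos.2, by omega⟩, rfl, rfl⟩

lemma ncard_weightedLists_le_sum {s : ℕ} (hs : 0 < s) :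
    (weightedLists w s).ncard ≤ ∑ a with 0 < w a ∧ w a ≤ s, (weightedLists w (s - w a)).ncard :=
  calc (weightedLists w s).ncard
      ≤ (⋃ a ∈ ({a | 0 < w a ∧ w a ≤ s} : Finset α),
          (a :: ·) '' weightedLists w (s - w a)).ncard :=
        Set.ncard_le_ncard (weightedLists_subset_biUnion hs)
          (Set.Finite.biUnion (Set.toFinite _) fun _ _ => (finite_weightedLists _).image _)
    _ ≤ _ := Finset.set_ncard_biUnion_le _ _
    _ = _ := by simp only [Set.ncard_image_of_injective _ List.cons_injective]

variable {c : ℝ}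

lemma ncard_weightedLists_le_pow_mul_sum (hc : 0 < c) {s : ℕ} (hs : 0 < s)
    (ih : ∀ m < s, ((weightedLists w m).ncard : ℝ) ≤ c ^ m) :
    ((weightedLists w s).ncard : ℝ) ≤ c ^ s * ∑ a with 0 < w a, c⁻¹ ^ w a :=
  calc ((weightedLists w s).ncard : ℝ)
      ≤ ∑ a with 0 < w a ∧ w a ≤ s, ((weightedLists w (s - w a)).ncard : ℝ) := by
        exact_mod_cast ncard_weightedLists_le_sum hs
    _ ≤ ∑ a with 0 < w a ∧ w a ≤ s, c ^ s * c⁻¹ ^ w a := by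
        refine sum_le_sum fun a ha => ?_
        rw [mem_filter] at ha
        rw [inv_pow, ← pow_sub₀ c hc.ne' ha.2.2]
        exact ih _ (by omega)
    _ ≤ ∑ a with 0 < w a, c ^ s * c⁻¹ ^ w a :=
        sum_le_sum_of_subset_of_nonneg (monotone_filter_right _ fun _ _ => And.left)
          fun _ _ _ => by positivity
    _ = _ := (mul_sum ..).symm

lemma ncard_weightedLists_le_pow (hc : 0 < c) (h : ∑ a with 0 < w a, c⁻¹ ^ w a ≤ 1) (s : ℕ) :
    ((weightedLists w s).ncard : ℝ) ≤ c ^ s := by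
  induction s using Nat.strong_induction_on with
  | _ s ih =>
    rcases s.eq_zero_or_pos with rfl | hs
    · simp [weightedLists_zero]
    · calc _ ≤ c ^ s * ∑ a with 0 < w a, c⁻¹ ^ w a :=
            ncard_weightedLists_le_pow_mul_sum hc hs ih
        _ ≤ c ^ s := mul_le_of_le_one_right (by positivity) h

lemma ncard_weightedLists_lt_pow (hc : 0 < c) (h : ∑ a with 0 < w a, c⁻¹ ^ w a < 1) {s : ℕ}
    (hs : 0 < s) : ((weightedLists w s).ncard : ℝ) < c ^ s :=
  calc _ ≤ c ^ s * ∑ a with 0 < w a, c⁻¹ ^ w a :=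
        ncard_weightedLists_le_pow_mul_sum hc hs fun m _ => ncard_weightedLists_le_pow hc h.le m
    _ < c ^ s := mul_lt_of_lt_one_right (by positivity) h

end WeightedLists

section StarCount

variable {ι : Type*} [Fintype ι]

def starCount (b : ι → Bool) : ℕ := #{i | b i = true}

lemma pos_starCount_iff {b : ι → Bool} : 0 < starCount b ↔ ∃ i, b i = true := by
  simp [starCount, Finset.card_pos, Finset.filter_nonempty_iff]

variable [DecidableEq ι] {R : Type*} [CommSemiring R]

lemma sum_pow_starCount (x : R) : ∑ b : ι → Bool, x ^ starCount b = (x + 1) ^ Fintype.card ι :=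
  calc ∑ b : ι → Bool, x ^ starCount b
      = ∑ b : ι → Bool, ∏ i, if b i then x else 1 := by
        simp only [starCount, prod_ite, prod_const, one_pow, mul_one]
    _ = ∏ _i : ι, ∑ j : Bool, if j then x else 1 :=
        (Fintype.prod_sum fun (_ : ι) (j : Bool) => if j then x else 1).symm
    _ = (x + 1) ^ Fintype.card ι := by simp

lemma sum_pos_starCount_pow_add_one (x : R) :
    ∑ b : ι → Bool with 0 < starCount b, x ^ starCount b + 1 = (x + 1) ^ Fintype.card ι := by
  have hpos : ({b | 0 < starCount b} : Finset (ι → Bool)) = {fun _ => false}ᶜ := by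
    ext b
    simp [pos_starCount_iff, funext_iff]
  rw [← sum_pow_starCount, Fintype.sum_eq_add_sum_compl (fun _ => false), hpos]
  simp [starCount, add_comm]

end StarCount

lemma starsSet_eq_weightedLists (k s : ℕ) :
    starsSet k s = weightedLists (starCount (ι := Fin k)) s := by
  simp only [starsSet, weightedLists, pos_starCount_iff]
  rfl

lemma log_two_div_add_one_pow_lt_two {k : ℕ} (hk : 0 < k) : (Real.log 2 / k + 1) ^ k < 2 :=
  calc (Real.log 2 / k + 1) ^ k < Real.exp (Real.log 2 / k) ^ k :=
        pow_lt_pow_left₀ (Real.add_one_lt_exp (by positivity)) (by positivity) hk.ne'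
    _ = 2 := by rw [← Real.exp_nat_mul, mul_div_cancel₀ _ (by positivity), Real.exp_log two_pos]

/-- for all positive integers `k` and `s`,
`|stars(k,s)| < (k / ln 2)^s`. -/
theorem stars_card_bound (k s : ℕ) (hk : 0 < k) (hs : 0 < s) :
    ((starsSet k s).ncard : ℝ) < ((k : ℝ) / Real.log 2) ^ s := by
  rw [starsSet_eq_weightedLists]
  refine ncard_weightedLists_lt_pow (by positivity) ?_ hs
  have hsum := sum_pos_starCount_pow_add_one (ι := Fin k) (Real.log 2 / k)
  rw [Fintype.card_fin] at hsum
  rw [inv_div]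
  linarith [log_two_div_add_one_pow_lt_two hk]
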